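/- Sudakov-type lower bound on the Talagrand functional: there is a universal constant M > 0 such that if (T', d) is a finite pseudo-metric space of cardinality m ≥ 2 with d(s,t) ≥ ε for all s ≠ t, then γ₂(T', d) ≥ M·ε·√(log m), where γ₂(T',d) := inf over admissible sequences (𝒜_k) of sup_{t∈T'} ∑_{k≥0} 2^{k/2}·Δ(A_k(t)). -/

import Mathlib

/-!
An admissible sequence has at most `2 ^ 2 ^ k` cells at level `k`, so if `k` is the first level
with `m ≤ 2 ^ 2 ^ (k + 1)` then (for `k ≥ 1`) `2 ^ 2 ^ k < m` and by pigeonhole some cell of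
level `k` contains two distinct, hence `ε`-separated, points. That single term of the chain
already contributes `2 ^ (k / 2) ε`, and the choice of `k` gives `√(log m) ≤ 2 · 2 ^ (k / 2)`.
-/

open scoped ENNReal

/-- An admissible sequence of partitions of `T'`, encoded as a sequence of equivalence
relations: `P 0` has a single class, each `P (k+1)` refines `P k`, and `P k` has at most
`2^(2^k)` classes for `k ≥ 1`. -/
def IsAdmissibleSeq {T' : Type*} (P : ℕ → T' → T' → Prop) : Prop :=
  (∀ k, Equivalence (P k)) ∧
  (∀ t s, P 0 t s) ∧
  (∀ k t s, P (k + 1) t s → P k t s) ∧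
  (∀ k, 1 ≤ k → ∃ S : Finset T', S.card ≤ 2 ^ (2 ^ k) ∧ ∀ t, ∃ s ∈ S, P k t s)

/-- The diameter of the cell `A_k(t)` of the partition `P k` containing `t`. -/
noncomputable def cellDiam {T' : Type*} (d : T' → T' → ℝ) (P : ℕ → T' → T' → Prop)
    (k : ℕ) (t : T') : ℝ≥0∞ :=
  ⨆ (s) (u) (_ : P k t s) (_ : P k t u), ENNReal.ofReal (d s u)

/-- Talagrand's functional `γ₂(T', d)`. -/
noncomputable def gammaTwo {T' : Type*} (d : T' → T' → ℝ) : ℝ≥0∞ :=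
  ⨅ (P : ℕ → T' → T' → Prop) (_ : IsAdmissibleSeq P),
    ⨆ t, ∑' k : ℕ, ENNReal.ofReal ((2 : ℝ) ^ ((k : ℝ) / 2)) * cellDiam d P k t

theorem exists_le_two_pow_two_pow_succ (m : ℕ) :
    ∃ k, m ≤ 2 ^ 2 ^ (k + 1) ∧ (k = 0 ∨ 2 ^ 2 ^ k < m) := by
  have hex : ∃ k, m ≤ 2 ^ 2 ^ (k + 1) :=
    ⟨m, (Nat.lt_two_pow_self).le.trans
      (Nat.pow_le_pow_right two_pos (Nat.lt_two_pow_self.le.trans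
        (Nat.pow_le_pow_right two_pos (Nat.le_succ m))))⟩
  refine ⟨Nat.find hex, Nat.find_spec hex, ?_⟩
  rcases h : Nat.find hex with _ | j
  · exact .inl rfl
  · exact .inr (not_le.mp (Nat.find_min hex (h ▸ Nat.lt_succ_self j)))

theorem Real.sqrt_log_le_of_le_two_pow_two_pow {x : ℝ} (hx : 0 < x) (k : ℕ)
    (hxk : x ≤ 2 ^ 2 ^ (k + 1)) : √(Real.log x) ≤ 2 * 2 ^ ((k : ℝ) / 2) := by
  have hpow : (2 * (2 : ℝ) ^ ((k : ℝ) / 2)) ^ 2 = 2 ^ (k + 2) := by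
    rw [mul_pow, ← Real.rpow_mul_natCast zero_le_two, Nat.cast_two,
      div_mul_cancel₀ _ two_ne_zero, Real.rpow_natCast, pow_add]
    ring
  have hlog : Real.log x ≤ 2 ^ (k + 2) :=
    calc Real.log x ≤ Real.log (2 ^ 2 ^ (k + 1)) := Real.log_le_log hx hxk
      _ = 2 ^ (k + 1) * Real.log 2 := by rw [Real.log_pow]; push_cast; ring
      _ ≤ 2 ^ (k + 1) * 1 := by gcongr; linarith [Real.log_two_lt_d9]
      _ ≤ 2 ^ (k + 2) := by rw [mul_one]; gcongr <;> norm_num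
  rw [Real.sqrt_le_iff]
  exact ⟨by positivity, hpow ▸ hlog⟩

section Admissible

variable {T' : Type*} {P : ℕ → T' → T' → Prop}

theorem IsAdmissibleSeq.exists_ne_rel_of_two_pow_two_pow_lt [Fintype T'] (hP : IsAdmissibleSeq P)
    {k : ℕ} (hk : 2 ^ 2 ^ k < Fintype.card T') : ∃ t s, t ≠ s ∧ P k t s := by
  obtain ⟨hequiv, htotal, -, hcard⟩ := hP
  rcases Nat.eq_zero_or_pos k with rfl | hk1
  · obtain ⟨t, s, hts⟩ := Fintype.exists_pair_of_one_lt_card (α := T') (by omega)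
    exact ⟨t, s, hts, htotal t s⟩
  obtain ⟨S, hS, hcover⟩ := hcard k hk1
  choose f hfS hfP using hcover
  obtain ⟨t, s, hts, hfts⟩ := Fintype.exists_ne_map_eq_of_card_lt
    (fun t : T' => (⟨f t, hfS t⟩ : S)) (by rw [Fintype.card_coe]; omega)
  have hfts : f t = f s := congrArg Subtype.val hfts
  exact ⟨t, s, hts, (hequiv k).trans (hfP t) (hfts ▸ (hequiv k).symm (hfP s))⟩

theorem IsAdmissibleSeq.exists_level_ne_rel [Fintype T'] (hP : IsAdmissibleSeq P)
    (hcard : 1 < Fintype.card T') :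
    ∃ k, Fintype.card T' ≤ 2 ^ 2 ^ (k + 1) ∧ ∃ t s, t ≠ s ∧ P k t s := by
  obtain ⟨k, hk, rfl | hlt⟩ := exists_le_two_pow_two_pow_succ (Fintype.card T')
  · obtain ⟨t, s, hts⟩ := Fintype.exists_pair_of_one_lt_card hcard
    exact ⟨0, hk, t, s, hts, hP.2.1 t s⟩
  · exact ⟨k, hk, hP.exists_ne_rel_of_two_pow_two_pow_lt hlt⟩

theorem ofReal_le_cellDiam (d : T' → T' → ℝ) {k : ℕ} {t s u : T'} (hs : P k t s)
    (hu : P k t u) : ENNReal.ofReal (d s u) ≤ cellDiam d P k t :=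
  le_iSup_of_le s <| le_iSup_of_le u <| le_iSup_of_le hs <| le_iSup_of_le hu le_rfl

theorem le_gammaTwo_of_forall_exists (d : T' → T' → ℝ) {c : ℝ≥0∞}
    (h : ∀ P : ℕ → T' → T' → Prop, IsAdmissibleSeq P →
      ∃ (k : ℕ) (t : T'), c ≤ ENNReal.ofReal ((2 : ℝ) ^ ((k : ℝ) / 2)) * cellDiam d P k t) :
    c ≤ gammaTwo d := by
  refine le_iInf₂ fun P hP => ?_
  obtain ⟨k, t, hc⟩ := h P hP
  exact hc.trans <| (ENNReal.le_tsum (f := fun k : ℕ =>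
    ENNReal.ofReal ((2 : ℝ) ^ ((k : ℝ) / 2)) * cellDiam d P k t) k).trans <|
    le_iSup (fun t => ∑' k : ℕ, ENNReal.ofReal ((2 : ℝ) ^ ((k : ℝ) / 2)) * cellDiam d P k t) t

end Admissible

/-- Sudakov-type lower bound: there is a universal constant `M > 0` such that for any
finite pseudo-metric space of cardinality `m ≥ 2` whose points are `ε`-separated,
`γ₂(T', d) ≥ M ε √(log m)`. -/
theorem gammaTwo_sudakov_lower_bound :
    ∃ M : ℝ, 0 < M ∧
      ∀ (T' : Type) [Fintype T'] (d : T' → T' → ℝ),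
        (∀ t, d t t = 0) → (∀ s t, d s t = d t s) →
        (∀ s t u, d s u ≤ d s t + d t u) → (∀ s t, 0 ≤ d s t) →
        ∀ ε > (0 : ℝ), (∀ s t, s ≠ t → ε ≤ d s t) →
        2 ≤ Fintype.card T' →
        ENNReal.ofReal (M * ε * Real.sqrt (Real.log (Fintype.card T'))) ≤ gammaTwo d := by
  refine ⟨1 / 2, by norm_num, fun T' _ d _ _ _ _ ε hε hsep hcard => ?_⟩
  refine le_gammaTwo_of_forall_exists d fun P hP => ?_
  obtain ⟨k, hk, t, s, hts, hPts⟩ := hP.exists_level_ne_rel hcard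
  have hsqrt : √(Real.log (Fintype.card T')) ≤ 2 * 2 ^ ((k : ℝ) / 2) :=
    Real.sqrt_log_le_of_le_two_pow_two_pow (by positivity) k (by exact_mod_cast hk)
  refine ⟨k, t, ?_⟩
  calc ENNReal.ofReal (1 / 2 * ε * √(Real.log (Fintype.card T')))
      ≤ ENNReal.ofReal (2 ^ ((k : ℝ) / 2) * ε) :=
        ENNReal.ofReal_le_ofReal (by nlinarith)
    _ = ENNReal.ofReal (2 ^ ((k : ℝ) / 2)) * ENNReal.ofReal ε :=
        ENNReal.ofReal_mul (by positivity)
    _ ≤ ENNReal.ofReal (2 ^ ((k : ℝ) / 2)) * cellDiam d P k t := by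
        gcongr
        exact (ENNReal.ofReal_le_ofReal (hsep t s hts)).trans
          (ofReal_le_cellDiam d ((hP.1 k).refl t) hPts)
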